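/- arXiv:math/0608457 — 2 statements merged into one kernel-verified Lean document; each statement's English description precedes it below -/
import Mathlib

section
/- For all 1 ≤ i < j ≤ q, the identity C_{i,j} = M_{i,j} + Σ_{k=i+1}^{j−1} C_{i,k} M_{k,j} holds in A (the terms of C_{i,j} grouped according to the highest element of the admissible sequence). -/
open scoped BigOperators

/-- A finite sequence of positive integers is *admissible* if between any two
occurrences of a number `s` there is an entry greater than `s`. -/
def IsAdmissible (l : List ℕ) : Prop :=
  ∀ (l₁ l₂ l₃ : List ℕ) (s : ℕ), l = l₁ ++ s :: (l₂ ++ s :: l₃) → ∃ t ∈ l₂, s < t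

/-- `Dset n` is the set of admissible sequences all of whose entries lie in
`{1, …, n-1}` (including the empty sequence). -/
def Dset (n : ℕ) : Set (List ℕ) :=
  {l | IsAdmissible l ∧ ∀ x ∈ l, 1 ≤ x ∧ x < n}

/-- The product `B i i₁ * B i₁ i₂ * ⋯ * B i_c j` along a sequence `[i₁, …, i_c]`;
the empty sequence contributes `B i j`. -/
def pathProd {A : Type*} [Ring A] (B : ℕ → ℕ → A) (i j : ℕ) : List ℕ → A
  | [] => B i j
  | a :: l => B i a * pathProd B a j l

/-- `M i j = Σ_{(i₁,…,i_c) ∈ D_{min(i,j)}} B i i₁ ⋯ B i_c j`. -/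
noncomputable def Mpoly {A : Type*} [Ring A] (B : ℕ → ℕ → A) (i j : ℕ) : A :=
  ∑ᶠ l ∈ Dset (min i j), pathProd B i j l

/-- `C i j` for `i < j` sums `B i i₁ ⋯ B i_c j` over sequences with
`(i, i₁, …, i_c) ∈ D_j`; and `C n n = M n n`. -/
noncomputable def Cpoly {A : Type*} [Ring A] (B : ℕ → ℕ → A) (i j : ℕ) : A :=
  if i = j then Mpoly B i j
  else ∑ᶠ l ∈ {l : List ℕ | (i :: l) ∈ Dset j}, pathProd B i j l

/-- The generators `B_{i,j}` of the free noncommutative unital ℤ-algebra. -/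
noncomputable def Bgen : ℕ → ℕ → FreeAlgebra ℤ (ℕ × ℕ) :=
  fun i j => FreeAlgebra.ι ℤ (i, j)

/-- The commuting indeterminates `B_{i,j}` of the polynomial ring `ℤ[B_{i,j}]`. -/
noncomputable def Bcomm : ℕ → ℕ → MvPolynomial (ℕ × ℕ) ℤ :=
  fun i j => MvPolynomial.X (i, j)

/-!
A sequence `l` with `i :: l ∈ D_j` either has all its entries below `i`, so that `l ∈ D_i`
and it contributes to `M_{i,j}`, or its largest entry `k` satisfies `i < k < j`. By
admissibility `k` then occurs exactly once, and cutting `l` there gives `l = l₁ ++ k :: l₂`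
with `i :: l₁ ∈ D_k` and `l₂ ∈ D_k`. This cut is a bijection onto such pairs, and the path
product factors along it, giving the term `C_{i,k} M_{k,j}`.
-/
theorem IsAdmissible.infix {l m : List ℕ} (h : IsAdmissible l) (hm : m <:+: l) :
    IsAdmissible m := by
  obtain ⟨u, v, rfl⟩ := hm
  rintro l₁ l₂ l₃ s rfl
  exact h (u ++ l₁) l₂ (l₃ ++ v) s (by simp)

namespace IsAdmissible

theorem nil : IsAdmissible [] := by
  intro l₁ l₂ l₃ s h
  simp at h

theorem forall_lt_of_append_cons {a b : List ℕ} {m : ℕ} (h : IsAdmissible (a ++ m :: b))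
    (hle : ∀ x ∈ a ++ m :: b, x ≤ m) : (∀ x ∈ a, x < m) ∧ ∀ x ∈ b, x < m := by
  have hlt : ∀ x ∈ a ++ m :: b, x ≠ m → x < m := fun x hx hne => (hle x hx).lt_of_ne hne
  refine ⟨fun x hx => hlt x (by simp [hx]) ?_, fun x hx => hlt x (by simp [hx]) ?_⟩
  · rintro rfl
    obtain ⟨u, v, rfl⟩ := List.append_of_mem hx
    obtain ⟨t, ht, hxt⟩ := h u v b x (by simp)
    exact (hle t (by simp [ht])).not_gt hxt
  · rintro rfl
    obtain ⟨u, v, rfl⟩ := List.append_of_mem hx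
    obtain ⟨t, ht, hxt⟩ := h a u v x (by simp)
    exact (hle t (by simp [ht])).not_gt hxt

theorem append_cons {a b : List ℕ} {k : ℕ} (ha : IsAdmissible a) (hb : IsAdmissible b)
    (hak : ∀ x ∈ a, x < k) (hbk : ∀ x ∈ b, x < k) : IsAdmissible (a ++ k :: b) := by
  have hka : k ∉ a := fun h => (hak k h).false
  have hkb : k ∉ b := fun h => (hbk k h).false
  intro l₁ l₂ l₃ s heq
  have hsk : s ≠ k := by
    rintro rfl
    have := congrArg (List.count s) heq
    simp only [List.count_append, List.count_cons_self, List.count_eq_zero_of_not_mem hka,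
      List.count_eq_zero_of_not_mem hkb, zero_add] at this
    omega
  have hs : s < k := by
    have hs : s ∈ a ++ k :: b := by simp [heq]
    simp only [List.mem_append, List.mem_cons] at hs
    rcases hs with hs | rfl | hs
    exacts [hak s hs, absurd rfl hsk, hbk s hs]
  have hk : k ∈ l₁ ++ s :: (l₂ ++ s :: l₃) := heq ▸ by simp
  simp only [List.mem_append, List.mem_cons, hsk.symm, false_or] at hk
  rcases hk with hk | hk | hk
  · obtain ⟨u, v, rfl⟩ := List.append_of_mem hk
    rw [List.append_assoc, List.cons_append] at heq
    obtain ⟨-, -, rfl⟩ := (List.append_cons_inj_of_notMem hka hkb).1 heq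
    exact hb v l₂ l₃ s rfl
  · exact ⟨k, hk, hs⟩
  · obtain ⟨u, v, rfl⟩ := List.append_of_mem hk
    obtain ⟨rfl, -, -⟩ := (List.append_cons_inj_of_notMem hka hkb).1
      (heq.trans (by simp : _ = (l₁ ++ s :: (l₂ ++ s :: u)) ++ k :: v))
    exact ha l₁ l₂ u s rfl

theorem length_lt_two_pow {n : ℕ} {l : List ℕ} (h : IsAdmissible l)
    (hl : ∀ x ∈ l, x < n) : l.length < 2 ^ n := by
  induction n generalizing l with
  | zero =>
    obtain rfl : l = [] := List.eq_nil_iff_forall_not_mem.2 fun x hx => Nat.not_lt_zero x (hl x hx)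
    simp
  | succ n ih =>
    have hle : ∀ x ∈ l, x ≤ n := fun x hx => Nat.lt_succ_iff.1 (hl x hx)
    by_cases hn : n ∈ l
    · obtain ⟨a, b, rfl⟩ := List.append_of_mem hn
      obtain ⟨ha, hb⟩ := h.forall_lt_of_append_cons hle
      have := ih (h.infix ⟨[], n :: b, by simp⟩) ha
      have := ih (h.infix ⟨a ++ [n], [], by simp⟩) hb
      simp only [List.length_append, List.length_cons, pow_succ]
      omega
    · calc l.length < 2 ^ n := ih h fun x hx => (hle x hx).lt_of_ne (ne_of_mem_of_not_mem hx hn)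
        _ ≤ 2 ^ (n + 1) := Nat.pow_le_pow_right two_pos n.le_succ

end IsAdmissible

theorem finite_setOf_forall_lt_length_lt (n N : ℕ) :
    {l : List ℕ | (∀ x ∈ l, x < n) ∧ l.length < N}.Finite :=
  ((List.finite_length_lt (Fin n) N).image (List.map Fin.val)).subset fun l ⟨hl, hN⟩ =>
    ⟨l.pmap Fin.mk hl, by simpa using hN, by simp [List.map_pmap]⟩

theorem Dset_finite (n : ℕ) : (Dset n).Finite :=
  (finite_setOf_forall_lt_length_lt n (2 ^ n)).subset fun _ hl =>
    ⟨fun x hx => (hl.2 x hx).2, hl.1.length_lt_two_pow fun x hx => (hl.2 x hx).2⟩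

theorem finite_setOf_cons_mem_Dset (i j : ℕ) : {l : List ℕ | i :: l ∈ Dset j}.Finite :=
  (Dset_finite j).preimage List.cons_injective.injOn

theorem Dset_mono {m n : ℕ} (hmn : m ≤ n) : Dset m ⊆ Dset n :=
  fun _ hl => ⟨hl.1, fun x hx => ⟨(hl.2 x hx).1, (hl.2 x hx).2.trans_le hmn⟩⟩

theorem append_cons_mem_Dset {a b : List ℕ} {k : ℕ} (hk : 1 ≤ k) (ha : a ∈ Dset k)
    (hb : b ∈ Dset k) : a ++ k :: b ∈ Dset (k + 1) := by
  refine ⟨ha.1.append_cons hb.1 (fun x hx => (ha.2 x hx).2) (fun x hx => (hb.2 x hx).2), ?_⟩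
  intro x hx
  simp only [List.mem_append, List.mem_cons] at hx
  rcases hx with hx | rfl | hx
  exacts [⟨(ha.2 x hx).1, (ha.2 x hx).2.trans (Nat.lt_succ_self _)⟩, ⟨hk, Nat.lt_succ_self _⟩,
    ⟨(hb.2 x hx).1, (hb.2 x hx).2.trans (Nat.lt_succ_self _)⟩]

theorem cons_mem_Dset_of_mem_Dset {i j : ℕ} {l : List ℕ} (hi : 1 ≤ i) (hij : i < j)
    (hl : l ∈ Dset i) : i :: l ∈ Dset j :=
  Dset_mono hij (append_cons_mem_Dset hi ⟨IsAdmissible.nil, by simp⟩ hl)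

/-- The sequences `l₁ ++ k :: l₂` with `i :: l₁ ∈ D_k` and `l₂ ∈ D_k`, i.e. those indexing
`C_{i,j}` whose largest entry is `k`. -/
def topSplit (i k : ℕ) : Set (List ℕ) :=
  (fun p : List ℕ × List ℕ => p.1 ++ k :: p.2) '' ({l | i :: l ∈ Dset k} ×ˢ Dset k)

theorem mem_and_le_of_mem_topSplit {i k : ℕ} {l : List ℕ} (hl : l ∈ topSplit i k) :
    k ∈ l ∧ ∀ x ∈ l, x ≤ k := by
  obtain ⟨⟨a, b⟩, ⟨ha, hb⟩, rfl⟩ := hl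
  refine ⟨by simp, fun x hx => ?_⟩
  simp only [List.mem_append, List.mem_cons] at hx
  rcases hx with hx | rfl | hx
  exacts [(ha.2 x (by simp [hx])).2.le, le_rfl, (hb.2 x hx).2.le]

theorem cons_mem_Dset_of_mem_topSplit {i k j : ℕ} {l : List ℕ} (hkj : k < j)
    (hl : l ∈ topSplit i k) : i :: l ∈ Dset j := by
  obtain ⟨⟨a, b⟩, ⟨ha, hb⟩, rfl⟩ := hl
  have hik : 1 ≤ i ∧ i < k := ha.2 i (by simp)
  exact Dset_mono hkj (append_cons_mem_Dset (by omega) ha hb)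

theorem setOf_cons_mem_Dset_subset {i j : ℕ} :
    {l : List ℕ | i :: l ∈ Dset j} ⊆ Dset i ∪ ⋃ k ∈ (Finset.Ioo i j : Set ℕ), topSplit i k := by
  rintro l ⟨hadm, hbd⟩
  obtain ⟨m, hm, hmax⟩ := (i :: l).toFinset.exists_max_image id ⟨i, by simp⟩
  rw [List.mem_toFinset] at hm
  obtain ⟨a, b, hab⟩ := List.append_of_mem hm
  rw [hab] at hadm hbd hmax
  obtain ⟨ha, hb⟩ := hadm.forall_lt_of_append_cons fun x hx => hmax x (List.mem_toFinset.2 hx)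
  -- the maximum `m` of `i :: l` is either its head `i` or an entry of `l` above `i`
  cases a with
  | nil =>
    obtain ⟨rfl, rfl⟩ := List.cons.inj hab
    exact Or.inl ⟨hadm.infix ⟨[i], [], by simp⟩, fun x hx => ⟨(hbd x (by simp [hx])).1, hb x hx⟩⟩
  | cons _ a =>
    obtain ⟨rfl, rfl⟩ := List.cons.inj hab
    refine Or.inr (Set.mem_biUnion (x := m) ?_ ⟨(a, b), ⟨⟨?_, ?_⟩, ⟨?_, ?_⟩⟩, rfl⟩)
    · simp [ha i (by simp), (hbd m (by simp)).2]
    · exact hadm.infix ⟨[], m :: b, by simp⟩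
    · exact fun x hx => ⟨(hbd x (List.mem_append_left _ hx)).1, ha x hx⟩
    · exact hadm.infix ⟨i :: a ++ [m], [], by simp⟩
    · exact fun x hx => ⟨(hbd x (by simp [hx])).1, hb x hx⟩

theorem setOf_cons_mem_Dset_eq {i j : ℕ} (hi : 1 ≤ i) (hij : i < j) :
    {l : List ℕ | i :: l ∈ Dset j} = Dset i ∪ ⋃ k ∈ (Finset.Ioo i j : Set ℕ), topSplit i k := by
  refine setOf_cons_mem_Dset_subset.antisymm (Set.union_subset ?_ (Set.iUnion₂_subset ?_))
  · exact fun l hl => cons_mem_Dset_of_mem_Dset hi hij hl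
  · exact fun k hk l hl => cons_mem_Dset_of_mem_topSplit (Finset.mem_Ioo.1 hk).2 hl

theorem disjoint_Dset_biUnion_topSplit (i : ℕ) (s : Set ℕ) (hs : ∀ k ∈ s, i < k) :
    Disjoint (Dset i) (⋃ k ∈ s, topSplit i k) := by
  refine Set.disjoint_left.2 fun l hl hl' => ?_
  obtain ⟨k, hk, hlk⟩ := Set.mem_iUnion₂.1 hl'
  exact (hs k hk).not_gt (hl.2 k (mem_and_le_of_mem_topSplit hlk).1).2

theorem topSplit_pairwise_disjoint (i : ℕ) :
    Pairwise fun k k' => Disjoint (topSplit i k) (topSplit i k') := by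
  refine fun k k' hne => Set.disjoint_left.2 fun l hl hl' => hne ?_
  obtain ⟨hk, hle⟩ := mem_and_le_of_mem_topSplit hl
  obtain ⟨hk', hle'⟩ := mem_and_le_of_mem_topSplit hl'
  exact (hle' k hk).antisymm (hle k' hk')

theorem topSplit_finite (i k : ℕ) : (topSplit i k).Finite :=
  ((finite_setOf_cons_mem_Dset i k).prod (Dset_finite k)).image _

theorem finsum_mem_mul_finsum_mem {α β R : Type*} [NonUnitalNonAssocSemiring R] {s : Set α}
    {t : Set β} (hs : s.Finite) (ht : t.Finite) (f : α → R) (g : β → R) :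
    (∑ᶠ a ∈ s, f a) * ∑ᶠ b ∈ t, g b = ∑ᶠ p ∈ s ×ˢ t, f p.1 * g p.2 := by
  rw [finsum_mem_eq_finite_toFinset_sum _ hs, finsum_mem_eq_finite_toFinset_sum _ ht,
    finsum_mem_eq_finite_toFinset_sum _ (hs.prod ht), Finset.sum_mul_sum,
    ← Set.Finite.toFinset_prod, Finset.sum_product]

theorem pathProd_append_cons {A : Type*} [Ring A] (B : ℕ → ℕ → A) (i k j : ℕ) (a b : List ℕ) :
    pathProd B i j (a ++ k :: b) = pathProd B i k a * pathProd B k j b := by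
  induction a generalizing i with
  | nil => rfl
  | cons x a ih => simp only [List.cons_append, pathProd, ih, mul_assoc]

theorem finsum_mem_topSplit {A : Type*} [Ring A] (B : ℕ → ℕ → A) (i k j : ℕ) :
    ∑ᶠ l ∈ topSplit i k, pathProd B i j l =
      (∑ᶠ l ∈ {l : List ℕ | i :: l ∈ Dset k}, pathProd B i k l) *
        ∑ᶠ l ∈ Dset k, pathProd B k j l := by
  have hinj : Set.InjOn (fun p : List ℕ × List ℕ => p.1 ++ k :: p.2)
      ({l | i :: l ∈ Dset k} ×ˢ Dset k) := by
    rintro ⟨a, b⟩ ⟨ha, hb⟩ ⟨a', b'⟩ - h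
    have hka : k ∉ a := fun hk => (ha.2 k (List.mem_cons_of_mem i hk)).2.false
    have hkb : k ∉ b := fun hk => (hb.2 k hk).2.false
    obtain ⟨rfl, -, rfl⟩ := (List.append_cons_inj_of_notMem hka hkb).1 h
    rfl
  rw [topSplit, finsum_mem_image hinj,
    finsum_mem_mul_finsum_mem (finite_setOf_cons_mem_Dset i k) (Dset_finite k)]
  simp only [pathProd_append_cons]

theorem Cpoly_eq_Mpoly_add_sum {A : Type*} [Ring A] (B : ℕ → ℕ → A) {i j : ℕ} (hi : 1 ≤ i)
    (hij : i < j) :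
    Cpoly B i j = Mpoly B i j + ∑ k ∈ Finset.Ioo i j, Cpoly B i k * Mpoly B k j := by
  have hIoo : ∀ k ∈ (Finset.Ioo i j : Set ℕ), i < k := fun k hk => (Finset.mem_Ioo.1 hk).1
  rw [Cpoly, if_neg hij.ne, setOf_cons_mem_Dset_eq hi hij,
    finsum_mem_union (disjoint_Dset_biUnion_topSplit i _ hIoo) (Dset_finite i)
      ((Finset.Ioo i j).finite_toSet.biUnion fun k _ => topSplit_finite i k),
    finsum_mem_biUnion ((topSplit_pairwise_disjoint i).set_pairwise _)
      (Finset.Ioo i j).finite_toSet fun k _ => topSplit_finite i k,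
    finsum_mem_coe_finset, Mpoly, min_eq_left hij.le]
  refine congrArg _ (Finset.sum_congr rfl fun k hk => ?_)
  obtain ⟨hik, hkj⟩ := Finset.mem_Ioo.1 hk
  rw [finsum_mem_topSplit, Cpoly, if_neg hik.ne, Mpoly, min_eq_left hkj.le]

theorem C_eq_M_add_sum_CM_general (i j : ℕ) (hi : 1 ≤ i) (hij : i < j) :
    Cpoly Bgen i j =
      Mpoly Bgen i j + ∑ k ∈ Finset.Ioo i j, Cpoly Bgen i k * Mpoly Bgen k j :=
  Cpoly_eq_Mpoly_add_sum Bgen hi hij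

/-- `C_{i,j} = M_{i,j} + Σ_{k=i+1}^{j-1} C_{i,k} M_{k,j}` for `1 ≤ i < j ≤ q`. -/
theorem C_eq_M_add_sum_CM (q i j : ℕ) (hi : 1 ≤ i) (hij : i < j) (hjq : j ≤ q) :
    Cpoly Bgen i j =
      Mpoly Bgen i j + ∑ k ∈ Finset.Ioo i j, Cpoly Bgen i k * Mpoly Bgen k j :=
  C_eq_M_add_sum_CM_general i j hi hij
end

section
/- Let R be a commutative ring and let β = (i_1, …, i_w) be a positive braid word on q strands with labels b_1, …, b_w ∈ R and underlying permutation π. For 0 ≤ k ≤ w set π_k = τ_{i_k} ∘ ⋯ ∘ τ_{i_1} (so π_0 = id and π_w = π), and let A_k = I_q + b_k·e_{π_{k−1}^{-1}(i_k), π_{k−1}^{-1}(i_k+1)}, where e_{r,s} denotes the q×q matrix whose only nonzero entry is a 1 in position (r,s). Then B_β(b_1, …, b_w) = A_1 A_2 ⋯ A_w P_π. -/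
/-- `Ematrix q R i b` is the `q×q` matrix over `R` agreeing with the identity except
that its `2×2` submatrix in (1-based) rows and columns `i, i+1` is `[[b, 1], [1, 0]]`. -/
def Ematrix (q : ℕ) (R : Type*) [CommRing R] (i : ℕ) (b : R) :
    Matrix (Fin q) (Fin q) R :=
  Matrix.of fun r s =>
    if (r : ℕ) + 1 = i ∧ (s : ℕ) + 1 = i then b
    else if (r : ℕ) + 1 = i ∧ (s : ℕ) + 1 = i + 1 then 1
    else if (r : ℕ) + 1 = i + 1 ∧ (s : ℕ) + 1 = i then 1
    else if (r : ℕ) + 1 = i + 1 ∧ (s : ℕ) + 1 = i + 1 then 0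
    else if r = s then 1 else 0

/-- A positive braid word on `q` strands: a sequence of generator indices `i_k`
with `1 ≤ i_k ≤ q - 1`. -/
def IsBraidWord (q : ℕ) {w : ℕ} (β : Fin w → ℕ) : Prop :=
  ∀ k, 1 ≤ β k ∧ β k + 1 ≤ q

/-- The path matrix `B_β(b₁, …, b_w) = E_{i₁}(b₁) ⋯ E_{i_w}(b_w)`. -/
def pathMatrix (q : ℕ) (R : Type*) [CommRing R] {w : ℕ}
    (β : Fin w → ℕ) (b : Fin w → R) : Matrix (Fin q) (Fin q) R :=
  (List.ofFn fun k : Fin w => Ematrix q R (β k) (b k)).prod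

/-- The underlying permutation `π = τ_{i_w} ∘ ⋯ ∘ τ_{i_1}` of a braid word. -/
def braidPerm {w : ℕ} (β : Fin w → ℕ) : Equiv.Perm ℕ :=
  ((List.ofFn fun k : Fin w => Equiv.swap (β k) (β k + 1)).reverse).prod

/-- The permutation matrix `P_σ = [δ_{σ(i),j}]` (1-based indices). -/
def permMatrix (q : ℕ) (R : Type*) [CommRing R] (σ : Equiv.Perm ℕ) :
    Matrix (Fin q) (Fin q) R :=
  Matrix.of fun r s => if σ ((r : ℕ) + 1) = (s : ℕ) + 1 then 1 else 0

/-- The `(i,j)` entry of a `q×q` matrix, with 1-based indices `1 ≤ i, j ≤ q`. -/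
def entry1 {q : ℕ} {R : Type*} [Zero R] (M : Matrix (Fin q) (Fin q) R) (i j : ℕ) : R :=
  if h : i - 1 < q ∧ j - 1 < q then M ⟨i - 1, h.1⟩ ⟨j - 1, h.2⟩ else 0

/-- The upper-left `n×n` submatrix of a `q×q` matrix. -/
def principalMinor {q : ℕ} {R : Type*} [Zero R]
    (M : Matrix (Fin q) (Fin q) R) (n : ℕ) : Matrix (Fin n) (Fin n) R :=
  Matrix.of fun i j => entry1 M ((i : ℕ) + 1) ((j : ℕ) + 1)

/-- `e_{r,s}` scaled by `b`: the `q×q` matrix whose only possibly nonzero entry is `b`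
in (1-based) position `(r, s)`. -/
def stdE (q : ℕ) (R : Type*) [CommRing R] (r s : ℕ) (b : R) :
    Matrix (Fin q) (Fin q) R :=
  Matrix.of fun x y => if (x : ℕ) + 1 = r ∧ (y : ℕ) + 1 = s then b else 0

/-!
Each generator factors as `E_i(b) = (1 + b e_{i,i+1}) P_{τ_i}`, and a permutation matrix moves
to the right past an elementary factor by relabelling it:
`P_σ (1 + b e_{r,s}) = (1 + b e_{σ⁻¹ r, σ⁻¹ s}) P_σ`, while `P_σ P_ρ = P_{ρσ}`. Sweeping
the permutation matrices in `E_{i_1}(b_1) ⋯ E_{i_k}(b_k)` to the right turns it into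
`A_1 ⋯ A_k P_{π_k}`.
Permutations act on all of ℕ while matrix indices are `1, …, q`; both identities hold for
permutations stabilizing that window, as every `π_k` does because `1 ≤ i_k < q`.
-/

open MulAction Set
open scoped Pointwise

section Window

variable {q : ℕ} {σ : Equiv.Perm ℕ}

lemma apply_mem_Icc_iff (hσ : σ ∈ stabilizer (Equiv.Perm ℕ) (Icc 1 q)) (x : ℕ) :
    σ x ∈ Icc 1 q ↔ x ∈ Icc 1 q := by
  have h := smul_mem_smul_set_iff (a := σ) (x := x) (s := Icc 1 q)
  rwa [mem_stabilizer_iff.mp hσ] at h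

lemma exists_apply_succ_eq_succ (hσ : σ ∈ stabilizer (Equiv.Perm ℕ) (Icc 1 q)) (x : Fin q) :
    ∃ z : Fin q, σ ((x : ℕ) + 1) = (z : ℕ) + 1 := by
  have hx := (apply_mem_Icc_iff hσ ((x : ℕ) + 1)).mpr ⟨by omega, x.isLt⟩
  exact ⟨⟨σ ((x : ℕ) + 1) - 1, by grind⟩, by grind⟩

lemma swap_succ_mem_stabilizer_Icc {i : ℕ} (h1 : 1 ≤ i) (h2 : i + 1 ≤ q) :
    Equiv.swap i (i + 1) ∈ stabilizer (Equiv.Perm ℕ) (Icc 1 q) := by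
  rw [mem_stabilizer_iff]
  ext x
  rw [mem_smul_set_iff_inv_smul_mem, Equiv.Perm.smul_def, Equiv.swap_inv, Equiv.swap_apply_def]
  split_ifs <;> simp only [mem_Icc] <;> omega

end Window

section Matrices

variable {q : ℕ} {R : Type*} [CommRing R] {σ : Equiv.Perm ℕ}

lemma permMatrix_mul_apply (M : Matrix (Fin q) (Fin q) R) {x z : Fin q}
    (h : σ ((x : ℕ) + 1) = (z : ℕ) + 1) (y : Fin q) :
    (permMatrix q R σ * M) x y = M z y := by
  simp only [Matrix.mul_apply, permMatrix, Matrix.of_apply, h, add_left_inj, Fin.val_inj,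
    ite_mul, one_mul, zero_mul, Finset.sum_ite_eq, Finset.mem_univ, if_true]

lemma mul_permMatrix_apply (M : Matrix (Fin q) (Fin q) R) {y z : Fin q}
    (h : σ ((z : ℕ) + 1) = (y : ℕ) + 1) (x : Fin q) :
    (M * permMatrix q R σ) x y = M x z := by
  simp only [Matrix.mul_apply, permMatrix, Matrix.of_apply, ← h, EmbeddingLike.apply_eq_iff_eq,
    add_left_inj, Fin.val_inj, mul_ite, mul_one, mul_zero, Finset.sum_ite_eq', Finset.mem_univ,
    if_true]

lemma permMatrix_one : permMatrix q R 1 = 1 := by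
  ext x y
  simp [permMatrix, Matrix.one_apply, Fin.val_inj]

lemma permMatrix_mul_permMatrix (hσ : σ ∈ stabilizer (Equiv.Perm ℕ) (Icc 1 q))
    (ρ : Equiv.Perm ℕ) :
    permMatrix q R σ * permMatrix q R ρ = permMatrix q R (ρ * σ) := by
  ext x y
  obtain ⟨z, hz⟩ := exists_apply_succ_eq_succ hσ x
  rw [permMatrix_mul_apply _ hz]
  simp [permMatrix, hz]

lemma permMatrix_mul_one_add_stdE (hσ : σ ∈ stabilizer (Equiv.Perm ℕ) (Icc 1 q))
    (r s : ℕ) (b : R) :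
    permMatrix q R σ * (1 + stdE q R r s b) =
      (1 + stdE q R (σ⁻¹ r) (σ⁻¹ s) b) * permMatrix q R σ := by
  rw [mul_add, add_mul, mul_one, one_mul, add_right_inj]
  ext x y
  obtain ⟨z, hz⟩ := exists_apply_succ_eq_succ hσ x
  obtain ⟨z', hz'⟩ := exists_apply_succ_eq_succ (inv_mem hσ) y
  rw [Equiv.Perm.inv_eq_iff_eq, eq_comm] at hz'
  rw [permMatrix_mul_apply _ hz, mul_permMatrix_apply _ hz']
  simp only [stdE, Matrix.of_apply, ← hz, Equiv.Perm.eq_inv_iff_eq, hz']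

lemma Ematrix_eq_one_add_stdE_mul_permMatrix {i : ℕ} (h1 : 1 ≤ i) (h2 : i + 1 ≤ q) (b : R) :
    Ematrix q R i b = (1 + stdE q R i (i + 1) b) * permMatrix q R (Equiv.swap i (i + 1)) := by
  ext x y
  obtain ⟨z, hz⟩ := exists_apply_succ_eq_succ (swap_succ_mem_stabilizer_Icc h1 h2) y
  have hz' : Equiv.swap i (i + 1) ((z : ℕ) + 1) = (y : ℕ) + 1 := by
    rw [← hz, Equiv.swap_apply_self]
  rw [add_mul, one_mul, Matrix.add_apply, mul_permMatrix_apply _ hz']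
  simp only [Ematrix, permMatrix, stdE, Matrix.of_apply, ← hz, Equiv.swap_apply_def, Fin.ext_iff]
  split_ifs <;> first | rfl | omega | simp

end Matrices

section BraidWord

variable {w : ℕ}

def prefixPerm (β : Fin w → ℕ) (k : ℕ) : Equiv.Perm ℕ :=
  ((List.ofFn fun j : Fin w => Equiv.swap (β j) (β j + 1)).take k).reverse.prod

lemma prefixPerm_zero (β : Fin w → ℕ) : prefixPerm β 0 = 1 := by
  simp [prefixPerm]

lemma prefixPerm_succ (β : Fin w → ℕ) {k : ℕ} (hk : k < w) :
    prefixPerm β (k + 1) = Equiv.swap (β ⟨k, hk⟩) (β ⟨k, hk⟩ + 1) * prefixPerm β k := by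
  rw [prefixPerm, ← List.take_concat_get' _ _ (by simpa using hk)]
  simp [prefixPerm]

lemma prefixPerm_mem_stabilizer {q : ℕ} {β : Fin w → ℕ} (hβ : IsBraidWord q β) (k : ℕ) :
    prefixPerm β k ∈ stabilizer (Equiv.Perm ℕ) (Icc 1 q) := by
  refine Subgroup.list_prod_mem _ fun τ hτ => ?_
  obtain ⟨j, rfl⟩ := List.mem_ofFn.mp (List.take_subset _ _ (List.mem_reverse.mp hτ))
  exact swap_succ_mem_stabilizer_Icc (hβ j).1 (hβ j).2

def braidFactor (q : ℕ) (R : Type*) [CommRing R] (β : Fin w → ℕ) (b : Fin w → R) (k : Fin w) :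
    Matrix (Fin q) (Fin q) R :=
  1 + stdE q R ((prefixPerm β k)⁻¹ (β k)) ((prefixPerm β k)⁻¹ (β k + 1)) (b k)

lemma prod_take_Ematrix_eq {q : ℕ} {R : Type*} [CommRing R] {β : Fin w → ℕ}
    (hβ : IsBraidWord q β) (b : Fin w → R) {k : ℕ} (hk : k ≤ w) :
    ((List.ofFn fun j => Ematrix q R (β j) (b j)).take k).prod =
      ((List.ofFn (braidFactor q R β b)).take k).prod * permMatrix q R (prefixPerm β k) := by
  induction k with
  | zero => simp [prefixPerm_zero, permMatrix_one]
  | succ k ih =>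
    rw [List.prod_take_succ _ _ (by simpa using hk), List.prod_take_succ _ _ (by simpa using hk),
      ih (by omega), List.getElem_ofFn, List.getElem_ofFn]
    have hσ := prefixPerm_mem_stabilizer hβ k
    obtain ⟨h1, h2⟩ := hβ ⟨k, hk⟩
    set i := β ⟨k, hk⟩
    set A := ((List.ofFn (braidFactor q R β b)).take k).prod
    calc A * permMatrix q R (prefixPerm β k) * Ematrix q R i (b ⟨k, hk⟩)
        = A * (permMatrix q R (prefixPerm β k) * (1 + stdE q R i (i + 1) (b ⟨k, hk⟩))) *
            permMatrix q R (Equiv.swap i (i + 1)) := by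
          rw [Ematrix_eq_one_add_stdE_mul_permMatrix h1 h2]
          simp only [mul_assoc]
      _ = A * braidFactor q R β b ⟨k, hk⟩ * permMatrix q R (prefixPerm β (k + 1)) := by
          rw [permMatrix_mul_one_add_stdE hσ, prefixPerm_succ β hk,
            ← permMatrix_mul_permMatrix hσ, braidFactor]
          simp only [mul_assoc, i]

end BraidWord

/-- `B_β(b₁, …, b_w) = A₁ A₂ ⋯ A_w P_π`, where
`A_k = I_q + b_k · e_{π_{k−1}⁻¹(i_k), π_{k−1}⁻¹(i_k+1)}` and
`π_k = τ_{i_k} ∘ ⋯ ∘ τ_{i_1}`. -/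
theorem pathMatrix_eq_prod_A_mul_permMatrix (q : ℕ) (R : Type*) [CommRing R] {w : ℕ}
    (β : Fin w → ℕ) (hβ : IsBraidWord q β) (b : Fin w → R)
    (πp : ℕ → Equiv.Perm ℕ)
    (hπp : ∀ k : ℕ, πp k =
      (((List.ofFn fun j : Fin w => Equiv.swap (β j) (β j + 1)).take k).reverse).prod)
    (A : Fin w → Matrix (Fin q) (Fin q) R)
    (hA : ∀ k : Fin w, A k =
      1 + stdE q R ((πp (k : ℕ))⁻¹ (β k)) ((πp (k : ℕ))⁻¹ (β k + 1)) (b k)) :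
    pathMatrix q R β b = (List.ofFn A).prod * permMatrix q R (πp w) := by
  obtain rfl : πp = prefixPerm β := funext hπp
  obtain rfl : A = braidFactor q R β b := funext hA
  have h := prod_take_Ematrix_eq hβ b le_rfl
  rwa [List.take_of_length_le (by simp), List.take_of_length_le (by simp)] at h
end
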